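/- arXiv:2303.00796 — 3 statements merged into one kernel-verified Lean document; each statement's English description precedes it below -/
import Mathlib

section
/- If f : ℂ → ℂ satisfies f(x + 1/2) = −f(x) for all x ∈ ℂ, and S is any function assigning values S(x, y) ∈ ℂ to pairs of complex boundaries such that the axioms A1–A4 of fractional sums hold for the linear-translation span of f (namely S(x,z) = S(x,y) + S(y+1,z), S(x+s,y+s) equals the corresponding sum of the shifted function, S is linear in the summand, and S(1,1) = f(1)), then f(1/2) = 0. In particular, if f(1/2) ≠ 0, no fractional summation satisfying axioms A1–A4 exists for f. -/
/-- The set of translates of a function `f : ℂ → ℂ`. -/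
def translates (f : ℂ → ℂ) : Set (ℂ → ℂ) := {g | ∃ s : ℂ, g = fun x => f (x + s)}

/-- The linear-translation span of `f`. -/
noncomputable def transSpan (f : ℂ → ℂ) : Submodule ℂ (ℂ → ℂ) := Submodule.span ℂ (translates f)

theorem stmt_6 (f : ℂ → ℂ) (hf : ∀ x : ℂ, f (x + 1/2) = -f x)
    (S : (ℂ → ℂ) → ℂ → ℂ → ℂ)
    (hA1 : ∀ g ∈ transSpan f, ∀ x y z : ℂ, S g x y + S g (y + 1) z = S g x z)
    (hA2 : ∀ g ∈ transSpan f, ∀ s x y : ℂ,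
      S (fun t => g (t + s)) x y = S g (x + s) (y + s))
    (hA3 : ∀ g₁ ∈ transSpan f, ∀ g₂ ∈ transSpan f, ∀ a b x y : ℂ,
      S (fun t => a * g₁ t + b * g₂ t) x y = a * S g₁ x y + b * S g₂ x y)
    (hA4 : ∀ g ∈ transSpan f, S g 1 1 = g 1) :
    f (1/2) = 0 := by
  have hfmem : f ∈ transSpan f := by
    apply Submodule.subset_span
    exact ⟨0, by funext x; simp⟩
  -- key: S f (3/2) 1 = -S f 1 (1/2)
  have h2 := hA2 f hfmem (1/2) 1 (1/2)
  have h3 := hA3 f hfmem f hfmem (-1) 0 1 (1/2)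
  have heq : (fun t => f (t + 1/2)) = (fun t => (-1 : ℂ) * f t + 0 * f t) := by
    funext t; rw [hf t]; ring
  have hS : S f (1 + 1/2) (1/2 + 1/2) = -S f 1 (1/2) := by
    rw [← h2, heq, h3]; ring
  have h1 := hA1 f hfmem 1 (1/2) 1
  have h4 := hA4 f hfmem
  have hhalf : (1:ℂ)/2 + 1 = 1 + 1/2 := by ring
  rw [hhalf] at h1
  have hone : (1:ℂ)/2 + 1/2 = 1 := by ring
  rw [hone] at hS
  have hf1 : f 1 = 0 := by
    rw [hS, h4] at h1
    linear_combination -h1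
  have h5 := hf (1/2)
  rw [hone, hf1] at h5
  exact neg_eq_zero.mp h5.symm
end

section
/- Let x ∈ ℝ (or ℂ) with x ≠ 0 and e^{2πi/x} ≠ 1. Define F(β) := (1/2)·[ (e^z/(e^z−1))(β e^{zβ} − (e^{zβ}−1)/(e^z−1)) + (e^{−z}/(e^{−z}−1))(β e^{−zβ} − (e^{−zβ}−1)/(e^{−z}−1)) ] with z = 2πi/x. Then F(x) = x/2. (Interpretation: the fractional sum ∑_{k=1}^{x} cos(2πk/x)·k equals x/2.) -/
/-!
With `e^{zx} = 1`, both correction terms `(e^{±zx} - 1)/(e^{±z} - 1)` vanish at `β = x`, so the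
expression becomes `x/2 · (a/(a - 1) + a⁻¹/(a⁻¹ - 1))` with `a = e^z`, and the bracket equals `1`.
-/

open Complex Real

/-- The closed form of the fractional sum `∑_{k=1}^{β} k e^{wk}`. -/
noncomputable def expMulFracSum (w β : ℂ) : ℂ :=
  exp w / (exp w - 1) * (β * exp (w * β) - (exp (w * β) - 1) / (exp w - 1))

theorem expMulFracSum_of_exp_mul_eq_one {w β : ℂ} (h : exp (w * β) = 1) :
    expMulFracSum w β = β * (exp w / (exp w - 1)) := by
  simp only [expMulFracSum, h, sub_self, zero_div, sub_zero, mul_one]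
  ring

theorem div_sub_one_add_inv_div_inv_sub_one {K : Type*} [Field K] {a : K} (h0 : a ≠ 0)
    (h1 : a ≠ 1) : a / (a - 1) + a⁻¹ / (a⁻¹ - 1) = 1 := by
  have hsub : a - 1 ≠ 0 := sub_ne_zero.mpr h1
  field_simp
  ring

theorem stmt_17 (x z : ℂ) (hx : x ≠ 0) (hz : z = 2 * Real.pi * Complex.I / x)
    (hne : Complex.exp z ≠ 1)
    (F : ℂ → ℂ)
    (hF : F = fun β => (1/2) *
      ((Complex.exp z / (Complex.exp z - 1)) *
          (β * Complex.exp (z * β) - (Complex.exp (z * β) - 1) / (Complex.exp z - 1)) +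
        (Complex.exp (-z) / (Complex.exp (-z) - 1)) *
          (β * Complex.exp (-z * β) -
            (Complex.exp (-z * β) - 1) / (Complex.exp (-z) - 1)))) :
    F x = x / 2 := by
  have hF' : F x = 1 / 2 * (expMulFracSum z x + expMulFracSum (-z) x) := by
    rw [hF]; rfl
  have hperiod : exp (z * x) = 1 := by
    rw [hz, div_mul_cancel₀ _ hx, exp_two_pi_mul_I]
  have hperiod' : exp (-z * x) = 1 := by
    rw [neg_mul, Complex.exp_neg, hperiod, inv_one]
  have hcoeff := div_sub_one_add_inv_div_inv_sub_one (exp_ne_zero z) hne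
  rw [← Complex.exp_neg] at hcoeff
  rw [hF', expMulFracSum_of_exp_mul_eq_one hperiod, expMulFracSum_of_exp_mul_eq_one hperiod',
    ← mul_add, hcoeff]
  ring
end

section
/- For complex x with |x| < 1, log Γ(x+1) = −γ·x + ∑_{k=2}^∞ (ζ(k)/k)·(−x)^k, where γ is the Euler–Mascheroni constant and ζ is the Riemann zeta function. -/
open Complex

open Filter Topology Finset
open scoped Real Nat

/-!
Taking logarithms in Gauss's product `Γ(x + 1) = lim n ^ x / ∏_{j < n} (1 + x / (j + 1))` and
expanding every `log (1 + x / (j + 1))` in its Taylor series, the interchange of the two sums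
(Tannery's theorem, dominated by `‖x‖ ^ k * ζ(2)`) turns `∑_j (j + 1) ^ (-k)` into `ζ(k)` and the
linear terms into `x (log n - H_n) → -γ x`. Hence the series is *a* logarithm of `Γ(x + 1)`.
It is the principal one because its imaginary part lies in `(-π, π)`: adding `log (1 + x)` and
subtracting `(1 - γ) x` leaves `∑ (ζ(k) - 1) (-x) ^ k / k`, which has norm at most `1` on the unit
disc since `ζ(k) - 1 ≤ 2 ^ (2 - k) (ζ(2) - 1)`; and `|arg (1 + x)| < π / 2`, `0 < 1 - γ < 1 / 2`.
-/

lemma hasSum_one_div_nat_add_one_pow_riemannZeta (k : ℕ) :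
    HasSum (fun n : ℕ => 1 / ((n : ℂ) + 1) ^ (k + 2)) (riemannZeta (k + 2)) := by
  have hre : 1 < ((k : ℂ) + 2).re := by
    simp only [add_re, natCast_re, re_ofNat]; linarith [k.cast_nonneg (α := ℝ)]
  have h := zeta_eq_tsum_one_div_nat_add_one_cpow hre
  have hk : (k : ℂ) + 2 = ((k + 2 : ℕ) : ℂ) := by push_cast; rfl
  simp only [hk, cpow_natCast] at h
  rw [hk, h]
  refine Summable.hasSum (Summable.of_norm ?_)
  have := (summable_nat_add_iff 1).mpr (Real.summable_one_div_nat_pow.mpr (by omega : 1 < k + 2))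
  refine this.congr fun n => ?_
  have : ‖(n : ℂ) + 1‖ = (n : ℝ) + 1 := by norm_cast
  rw [norm_div, norm_one, norm_pow, this]
  push_cast; rfl

lemma hasSum_one_div_nat_add_two_pow_riemannZeta_sub_one (k : ℕ) :
    HasSum (fun n : ℕ => 1 / ((n : ℂ) + 2) ^ (k + 2)) (riemannZeta (k + 2) - 1) := by
  have h := (hasSum_nat_add_iff' 1).mpr (hasSum_one_div_nat_add_one_pow_riemannZeta k)
  simp only [sum_range_one, Nat.cast_zero, zero_add, one_pow, div_one, Nat.cast_add,
    Nat.cast_one, add_assoc, one_add_one_eq_two] at h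
  exact h

lemma hasSum_one_div_nat_add_one_sq :
    HasSum (fun n : ℕ => 1 / ((n : ℝ) + 1) ^ 2) (π ^ 2 / 6) := by
  have h := (hasSum_nat_add_iff' 1).mpr hasSum_zeta_two
  norm_num at h
  simpa only [one_div] using h

lemma hasSum_one_div_nat_add_two_sq :
    HasSum (fun n : ℕ => 1 / ((n : ℝ) + 2) ^ 2) (π ^ 2 / 6 - 1) := by
  have h := (hasSum_nat_add_iff' 1).mpr hasSum_one_div_nat_add_one_sq
  norm_num [add_assoc, one_add_one_eq_two] at h
  simpa only [one_div] using h

lemma norm_riemannZeta_nat_add_two_sub_one_le (k : ℕ) :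
    ‖riemannZeta (k + 2) - 1‖ ≤ (1 / 2) ^ k := by
  have hterm (n : ℕ) : ‖1 / ((n : ℂ) + 2) ^ (k + 2)‖ ≤ (1 / 2) ^ k * (1 / ((n : ℝ) + 2) ^ 2) := by
    have : ‖(n : ℂ) + 2‖ = (n : ℝ) + 2 := by norm_cast
    rw [norm_div, norm_one, norm_pow, this, pow_add, ← one_div_mul_one_div, ← one_div_pow]
    gcongr
    linarith [n.cast_nonneg (α := ℝ)]
  calc ‖riemannZeta (k + 2) - 1‖ ≤ (1 / 2) ^ k * (π ^ 2 / 6 - 1) :=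
        (hasSum_one_div_nat_add_two_pow_riemannZeta_sub_one k).norm_le_of_bounded
          (hasSum_one_div_nat_add_two_sq.mul_left _) hterm
    _ ≤ (1 / 2) ^ k := by
        have := Real.pi_lt_d2
        have : π ^ 2 / 6 - 1 ≤ 1 := by nlinarith [Real.pi_pos]
        exact mul_le_of_le_one_right (by positivity) this

lemma hasSum_log_one_add_sub_self {z : ℂ} (hz : ‖z‖ < 1) :
    HasSum (fun k : ℕ => -(-z) ^ (k + 2) / (k + 2)) (log (1 + z) - z) := by
  have h := (hasSum_nat_add_iff' 2).mpr (hasSum_taylorSeries_log hz)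
  norm_num [sum_range_succ] at h
  refine h.congr_fun fun k => ?_
  rw [neg_pow z]; ring

lemma norm_div_natCast_add_one_le (x : ℂ) (j : ℕ) : ‖x / (j + 1)‖ ≤ ‖x‖ := by
  have : ‖(j : ℂ) + 1‖ = (j : ℝ) + 1 := by norm_cast
  rw [norm_div, this]
  exact div_le_self (norm_nonneg x) (by linarith [j.cast_nonneg (α := ℝ)])

lemma hasSum_pow_div_mul_one_div_pow {x : ℂ} (hx : ‖x‖ < 1) (j : ℕ) :
    HasSum (fun k : ℕ => (-x) ^ (k + 2) / (k + 2) * (1 / ((j : ℂ) + 1) ^ (k + 2)))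
      (x / (j + 1) - log (1 + x / (j + 1))) := by
  have h := (hasSum_log_one_add_sub_self ((norm_div_natCast_add_one_le x j).trans_lt hx)).neg
  rw [neg_sub] at h
  refine h.congr_fun fun k => ?_
  rw [neg_div', neg_neg, ← neg_div, div_pow]
  ring

lemma prod_one_add_div_nat_add_one (x : ℂ) (n : ℕ) :
    ∏ j ∈ range n, (1 + x / (j + 1)) = (∏ j ∈ range n, (x + j + 1)) / n ! := by
  rw [← prod_range_add_one_eq_factorial, Nat.cast_prod, ← prod_div_distrib]
  refine prod_congr rfl fun j _ => ?_
  have : (j : ℂ) + 1 ≠ 0 := by norm_cast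
  push_cast
  field_simp
  ring

lemma GammaSeq_add_one_mul_eq {x : ℂ} {n : ℕ} (hn : n ≠ 0) (hxn : x + n + 1 ≠ 0) :
    GammaSeq (x + 1) n * ((x + n + 1) / n) = n ^ x / ∏ j ∈ range n, (1 + x / (j + 1)) := by
  have hn' : (n : ℂ) ≠ 0 := Nat.cast_ne_zero.2 hn
  rw [GammaSeq, prod_one_add_div_nat_add_one, prod_range_succ, cpow_add _ _ hn', cpow_one]
  have hshift : ∏ j ∈ range n, (x + 1 + j) = ∏ j ∈ range n, (x + j + 1) :=
    prod_congr rfl fun j _ => by ring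
  rw [hshift]
  -- if a factor vanishes, both sides are junk `0` by `x / 0 = 0`
  by_cases hP : ∏ j ∈ range n, (x + j + 1) = 0
  · simp [hP]
  · have : x + 1 + n ≠ 0 := by rwa [add_right_comm]
    field_simp
    ring

lemma eventually_add_natCast_add_one_ne_zero (x : ℂ) : ∀ᶠ n : ℕ in atTop, x + n + 1 ≠ 0 := by
  filter_upwards [(tendsto_natCast_atTop_atTop (R := ℝ)).eventually_gt_atTop ‖x‖] with n hn h
  have hx : x = -((n : ℂ) + 1) := by linear_combination h
  have : ‖(n : ℂ) + 1‖ = (n : ℝ) + 1 := by norm_cast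
  rw [hx, norm_neg, this] at hn
  linarith

theorem tendsto_cpow_div_prod_one_add_div (x : ℂ) :
    Tendsto (fun n : ℕ => (n : ℂ) ^ x / ∏ j ∈ range n, (1 + x / (j + 1))) atTop
      (𝓝 (Gamma (x + 1))) := by
  have hfrac : Tendsto (fun n : ℕ => (x + n + 1) / n) atTop (𝓝 1) := by
    have := (tendsto_const_div_atTop_nhds_zero_nat (x + 1)).const_add 1
    rw [add_zero] at this
    refine this.congr' ?_
    filter_upwards [eventually_ne_atTop 0] with n hn
    have : (n : ℂ) ≠ 0 := Nat.cast_ne_zero.2 hn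
    field_simp
    ring
  have := (GammaSeq_tendsto_Gamma (x + 1)).mul hfrac
  rw [mul_one] at this
  refine this.congr' ?_
  filter_upwards [eventually_ne_atTop 0, eventually_add_natCast_add_one_ne_zero x] with n hn hxn
  exact GammaSeq_add_one_mul_eq hn hxn

lemma exp_mul_log_sub_sum_log {x : ℂ} (hx : ∀ j : ℕ, 1 + x / (j + 1) ≠ 0) {n : ℕ} (hn : n ≠ 0) :
    exp (x * log n - ∑ j ∈ range n, log (1 + x / (j + 1))) =
      n ^ x / ∏ j ∈ range n, (1 + x / (j + 1)) := by
  rw [exp_sub, exp_sum, cpow_def_of_ne_zero (Nat.cast_ne_zero.2 hn), mul_comm]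
  exact congrArg _ (prod_congr rfl fun j _ => exp_log (hx j))

lemma tendsto_mul_log_sub_sum_div (x : ℂ) :
    Tendsto (fun n : ℕ => x * log n - ∑ j ∈ range n, x / (j + 1)) atTop
      (𝓝 (-Real.eulerMascheroniConstant * x)) := by
  have := ((continuous_ofReal.tendsto _).comp Real.tendsto_harmonic_sub_log).const_mul (-x)
  rw [neg_mul_comm, mul_comm] at this
  refine this.congr fun n => ?_
  simp only [Function.comp_apply, harmonic, div_eq_mul_inv, ← mul_sum]
  push_cast
  ring

noncomputable def logGammaSeries (x : ℂ) : ℂ :=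
  -(Real.eulerMascheroniConstant : ℂ) * x +
    ∑' k : ℕ, (riemannZeta ((k : ℂ) + 2) / ((k : ℂ) + 2)) * (-x) ^ (k + 2)

lemma norm_sum_range_pow_div_mul_one_div_pow_le {x : ℂ} (hx : ‖x‖ ≤ 1) (n k : ℕ) :
    ‖∑ j ∈ range n, (-x) ^ (k + 2) / (k + 2) * (1 / ((j : ℂ) + 1) ^ (k + 2))‖ ≤
      ‖x‖ ^ k * (π ^ 2 / 6) := by
  rw [← mul_sum, norm_mul]
  gcongr
  · have hk : ‖(k : ℂ) + 2‖ = (k : ℝ) + 2 := by norm_cast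
    rw [norm_div, norm_pow, norm_neg, hk, pow_add]
    have : ‖x‖ ^ 2 ≤ (k : ℝ) + 2 := by nlinarith [k.cast_nonneg (α := ℝ), norm_nonneg x]
    calc ‖x‖ ^ k * ‖x‖ ^ 2 / ((k : ℝ) + 2) ≤ ‖x‖ ^ k * ((k : ℝ) + 2) / ((k : ℝ) + 2) := by gcongr
      _ = ‖x‖ ^ k := by field_simp
  · refine (norm_sum_le _ _).trans ((sum_le_sum fun j _ => ?_).trans
      (sum_le_hasSum _ (fun _ _ => by positivity) hasSum_one_div_nat_add_one_sq))
    have hj : ‖(j : ℂ) + 1‖ = (j : ℝ) + 1 := by norm_cast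
    rw [norm_div, norm_one, norm_pow, hj]
    gcongr
    · linarith [j.cast_nonneg (α := ℝ)]
    · omega

lemma tendsto_tsum_sum_range_pow_div_mul_one_div_pow {x : ℂ} (hx : ‖x‖ < 1) :
    Tendsto (fun n : ℕ => ∑' k : ℕ, ∑ j ∈ range n,
        (-x) ^ (k + 2) / (k + 2) * (1 / ((j : ℂ) + 1) ^ (k + 2))) atTop
      (𝓝 (∑' k : ℕ, riemannZeta (k + 2) / (k + 2) * (-x) ^ (k + 2))) := by
  refine tendsto_tsum_of_dominated_convergence
    ((summable_geometric_of_lt_one (norm_nonneg x) hx).mul_right (π ^ 2 / 6)) (fun k => ?_)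
    (.of_forall (norm_sum_range_pow_div_mul_one_div_pow_le hx.le))
  have := (hasSum_one_div_nat_add_one_pow_riemannZeta k).tendsto_sum_nat.const_mul
    ((-x) ^ (k + 2) / (k + 2))
  simp only [mul_sum] at this
  convert this using 2
  ring

lemma tendsto_mul_log_sub_sum_log {x : ℂ} (hx : ‖x‖ < 1) :
    Tendsto (fun n : ℕ => x * log n - ∑ j ∈ range n, log (1 + x / (j + 1))) atTop
      (𝓝 (logGammaSeries x)) := by
  refine ((tendsto_mul_log_sub_sum_div x).add
    (tendsto_tsum_sum_range_pow_div_mul_one_div_pow hx)).congr fun n => ?_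
  rw [(hasSum_sum fun j _ => hasSum_pow_div_mul_one_div_pow hx j).tsum_eq, sum_sub_distrib]
  ring

lemma exp_logGammaSeries {x : ℂ} (hx : ‖x‖ < 1) : exp (logGammaSeries x) = Gamma (x + 1) := by
  have hne (j : ℕ) : 1 + x / (j + 1) ≠ 0 :=
    slitPlane_ne_zero (mem_slitPlane_of_norm_lt_one ((norm_div_natCast_add_one_le x j).trans_lt hx))
  refine tendsto_nhds_unique ((continuous_exp.tendsto _).comp (tendsto_mul_log_sub_sum_log hx)) ?_
  refine (tendsto_cpow_div_prod_one_add_div x).congr' ?_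
  filter_upwards [eventually_ne_atTop 0] with n hn
  exact (exp_mul_log_sub_sum_log hne hn).symm

lemma norm_riemannZeta_sub_one_div_mul_pow_le {x : ℂ} (hx : ‖x‖ ≤ 1) (k : ℕ) :
    ‖(riemannZeta (k + 2) - 1) / (k + 2) * (-x) ^ (k + 2)‖ ≤ 1 / 2 / 2 ^ k := by
  have hk : ‖(k : ℂ) + 2‖ = (k : ℝ) + 2 := by norm_cast
  rw [norm_mul, norm_div, norm_pow, norm_neg, hk]
  calc ‖riemannZeta (k + 2) - 1‖ / ((k : ℝ) + 2) * ‖x‖ ^ (k + 2)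
      ≤ (1 / 2) ^ k / 2 * 1 := by
        gcongr
        · exact norm_riemannZeta_nat_add_two_sub_one_le k
        · linarith [k.cast_nonneg (α := ℝ)]
        · exact pow_le_one₀ (norm_nonneg x) hx
    _ = 1 / 2 / 2 ^ k := by rw [one_div_pow, mul_one, div_div, div_div, mul_comm]

lemma norm_logGammaSeries_add_log_one_add_sub_le {x : ℂ} (hx : ‖x‖ < 1) :
    ‖logGammaSeries x + log (1 + x) - (1 - Real.eulerMascheroniConstant) * x‖ ≤ 1 := by
  have hterm := norm_riemannZeta_sub_one_div_mul_pow_le hx.le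
  have hrem : Summable fun k : ℕ => (riemannZeta (k + 2) - 1) / (k + 2) * (-x) ^ (k + 2) :=
    .of_norm_bounded (hasSum_geometric_two' 1).summable hterm
  have hzeta : HasSum (fun k : ℕ => riemannZeta (k + 2) / (k + 2) * (-x) ^ (k + 2))
      ((∑' k : ℕ, (riemannZeta (k + 2) - 1) / (k + 2) * (-x) ^ (k + 2)) - (log (1 + x) - x)) :=
    (hrem.hasSum.sub (hasSum_log_one_add_sub_self hx)).congr_fun fun k => by ring
  have hrem_eq : logGammaSeries x + log (1 + x) - (1 - Real.eulerMascheroniConstant) * x =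
      ∑' k : ℕ, (riemannZeta (k + 2) - 1) / (k + 2) * (-x) ^ (k + 2) := by
    rw [logGammaSeries, hzeta.tsum_eq]; ring
  rw [hrem_eq]
  exact tsum_of_norm_bounded (hasSum_geometric_two' 1) hterm

lemma abs_im_logGammaSeries_lt_pi {x : ℂ} (hx : ‖x‖ < 1) : |(logGammaSeries x).im| < π := by
  set γ := Real.eulerMascheroniConstant
  set R := logGammaSeries x + log (1 + x) - (1 - γ) * x
  have hR : |R.im| ≤ 1 := (abs_im_le_norm R).trans (norm_logGammaSeries_add_log_one_add_sub_le hx)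
  have hre : 0 < (1 + x).re := by
    have := neg_abs_le x.re
    have := (abs_re_le_norm x).trans_lt hx
    simp only [add_re, one_re]; linarith
  have harg : |(1 + x).arg| < π / 2 := abs_arg_lt_pi_div_two_iff.mpr (Or.inl hre)
  have hxim : |(1 - γ) * x.im| ≤ 1 / 2 := by
    have := (abs_im_le_norm x).trans hx.le
    rw [abs_mul, abs_of_pos (by linarith [Real.eulerMascheroniConstant_lt_two_thirds])]
    nlinarith [Real.one_half_lt_eulerMascheroniConstant, abs_nonneg x.im]
  have him : (logGammaSeries x).im = R.im - (1 + x).arg + (1 - γ) * x.im := by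
    simp only [R, sub_im, add_im, log_im, mul_im, sub_re, one_re, ofReal_re, one_im, ofReal_im,
      sub_self, zero_mul, add_zero]
    ring
  rw [him]
  have := Real.pi_gt_three
  rw [abs_le] at hR hxim
  rw [abs_lt] at harg ⊢
  constructor <;> linarith

theorem stmt_19 (x : ℂ) (hx : ‖x‖ < 1) :
    Complex.log (Complex.Gamma (x + 1)) =
      -(Real.eulerMascheroniConstant : ℂ) * x +
        ∑' k : ℕ, (riemannZeta ((k : ℂ) + 2) / ((k : ℂ) + 2)) * (-x) ^ (k + 2) := by
  obtain ⟨him_gt, him_lt⟩ := abs_lt.mp (abs_im_logGammaSeries_lt_pi hx)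
  rw [← exp_logGammaSeries hx, log_exp him_gt him_lt.le]
  rfl
end
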